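/- Let Γ be a finite simple graph, let (G_v) be a family of nontrivial groups indexed by the vertices of Γ, and let 𝒢 = 𝒢(Γ, {G_v}) be the associated graph product. Let N be a normal subgroup of 𝒢 and let H = ⋂_{v a vertex of Γ} N · 𝒢(lk(v)), where N · 𝒢(lk(v)) denotes the subgroup generated by N together with 𝒢(lk(v)). Then for every h ∈ H and every g ∈ 𝒢, the commutator [h,g] lies in N; that is, the image of H in 𝒢/N is contained in the center of 𝒢/N. -/

import Mathlib

/-- The set of defining relators of the graph product: commutators of elements of
vertex groups attached to adjacent vertices. -/
def graphProductRels {V : Type} (Γ : SimpleGraph V) (G : V → Type)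
    [∀ v, Group (G v)] : Subgroup (Monoid.CoprodI G) :=
  Subgroup.normalClosure
    { x | ∃ (v w : V) (g : G v) (h : G w), Γ.Adj v w ∧
        x = Monoid.CoprodI.of g * Monoid.CoprodI.of h *
              (Monoid.CoprodI.of g)⁻¹ * (Monoid.CoprodI.of h)⁻¹ }

instance graphProductRels.normal {V : Type} (Γ : SimpleGraph V) (G : V → Type)
    [∀ v, Group (G v)] : (graphProductRels Γ G).Normal :=
  Subgroup.normalClosure_normal

/-- The graph product of the groups `G v` over the simple graph `Γ`. -/
abbrev GraphProduct {V : Type} (Γ : SimpleGraph V) (G : V → Type)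
    [∀ v, Group (G v)] : Type :=
  Monoid.CoprodI G ⧸ graphProductRels Γ G

/-- The subgroup `𝒢(Δ)` of the graph product generated by the images of the vertex
groups attached to the vertices in the set `S`. -/
def vertexSubgroup {V : Type} (Γ : SimpleGraph V) (G : V → Type)
    [∀ v, Group (G v)] (S : Set V) : Subgroup (GraphProduct Γ G) :=
  Subgroup.closure
    { x | ∃ v ∈ S, ∃ g : G v,
        x = (QuotientGroup.mk (Monoid.CoprodI.of g) : GraphProduct Γ G) }

/-!
Write `π : 𝒢 → 𝒢/N`. The condition `⁅h, g⁆ ∈ N` says that `π h` commutes with `π g`, and the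
`g` satisfying it form a subgroup, so it suffices to check it on a generator `a ∈ G_v`.
Splitting `h = n k` with `n ∈ N` and `k ∈ 𝒢(lk v)` gives `π h = π k`, and `k` commutes with `a`
since every vertex group of `lk v` commutes with `G_v`.
-/

namespace QuotientGroup

variable {G : Type*} [Group G] {N : Subgroup G} [N.Normal]

theorem commute_mk_iff {a b : G} : Commute (a : G ⧸ N) b ↔ a * b * a⁻¹ * b⁻¹ ∈ N := by
  rw [← commutatorElement_eq_one_iff_commute, ← commutatorElement_def, ← eq_one_iff]
  rfl

theorem commute_mk_of_mem_sup_of_le_centralizer {K : Subgroup G} {h x : G}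
    (hK : K ≤ Subgroup.centralizer {x}) (hh : h ∈ N ⊔ K) : Commute (h : G ⧸ N) x := by
  obtain ⟨n, hn, k, hk, rfl⟩ := Subgroup.mem_sup_of_normal_left.mp hh
  have hnk : ((n * k : G) : G ⧸ N) = k := by
    rw [mk_mul, (eq_one_iff n).mpr hn, one_mul]
  have hkx : Commute k x := Subgroup.mem_centralizer_singleton_iff.mp (hK hk)
  rw [hnk]
  exact hkx.map (mk' N)

end QuotientGroup

namespace GraphProduct

variable {V : Type} {Γ : SimpleGraph V} {G : V → Type} [∀ v, Group (G v)]

theorem commute_mk_of_of_adj {v w : V} (hvw : Γ.Adj v w) (a : G v) (b : G w) :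
    Commute (QuotientGroup.mk (Monoid.CoprodI.of a) : GraphProduct Γ G)
      (QuotientGroup.mk (Monoid.CoprodI.of b)) :=
  QuotientGroup.commute_mk_iff.mpr (Subgroup.subset_normalClosure ⟨v, w, a, b, hvw, rfl⟩)

theorem vertexSubgroup_neighborSet_le_centralizer (v : V) (a : G v) :
    vertexSubgroup Γ G (Γ.neighborSet v) ≤
      Subgroup.centralizer {(QuotientGroup.mk (Monoid.CoprodI.of a) : GraphProduct Γ G)} := by
  rw [vertexSubgroup, Subgroup.closure_le]
  rintro _ ⟨w, hw, b, rfl⟩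
  exact Subgroup.mem_centralizer_singleton_iff.mpr (commute_mk_of_of_adj hw a b).symm

theorem vertexSubgroup_univ : vertexSubgroup Γ G Set.univ = ⊤ := by
  refine (Subgroup.eq_top_iff' _).mpr fun g => ?_
  obtain ⟨x, rfl⟩ := QuotientGroup.mk_surjective g
  induction x using Monoid.CoprodI.induction_on with
  | one => exact Subgroup.one_mem _
  | of v a => exact Subgroup.subset_closure ⟨_, Set.mem_univ _, a, rfl⟩
  | mul x y hx hy => exact Subgroup.mul_mem _ hx hy

end GraphProduct

open GraphProduct in
theorem image_of_inf_N_join_links_is_central_general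
    {V : Type} (Γ : SimpleGraph V) (G : V → Type)
    [∀ v, Group (G v)]
    (N : Subgroup (GraphProduct Γ G)) [N.Normal] :
    ∀ h ∈ ⨅ v : V, (N ⊔ vertexSubgroup Γ G (Γ.neighborSet v)),
      ∀ g : GraphProduct Γ G, h * g * h⁻¹ * g⁻¹ ∈ N := by
  intro h hh g
  let commutesWithH : Subgroup (GraphProduct Γ G) :=
    (Subgroup.centralizer {(h : GraphProduct Γ G ⧸ N)}).comap (QuotientGroup.mk' N)
  have hgen : vertexSubgroup Γ G Set.univ ≤ commutesWithH := by
    rw [vertexSubgroup, Subgroup.closure_le]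
    rintro _ ⟨v, -, a, rfl⟩
    exact Subgroup.mem_centralizer_singleton_iff.mpr
      (QuotientGroup.commute_mk_of_mem_sup_of_le_centralizer
        (vertexSubgroup_neighborSet_le_centralizer v a) (Subgroup.mem_iInf.mp hh v)).symm
  have hg : g ∈ commutesWithH := hgen (by rw [vertexSubgroup_univ]; exact Subgroup.mem_top g)
  exact QuotientGroup.commute_mk_iff.mp (Subgroup.mem_centralizer_singleton_iff.mp hg).symm

theorem image_of_inf_N_join_links_is_central
    {V : Type} [Fintype V] (Γ : SimpleGraph V) (G : V → Type)
    [∀ v, Group (G v)] [∀ v, Nontrivial (G v)]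
    (N : Subgroup (GraphProduct Γ G)) [N.Normal] :
    ∀ h ∈ ⨅ v : V, (N ⊔ vertexSubgroup Γ G (Γ.neighborSet v)),
      ∀ g : GraphProduct Γ G, h * g * h⁻¹ * g⁻¹ ∈ N :=
  image_of_inf_N_join_links_is_central_general Γ G N
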